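/- Let V be a finite set with symmetric weights 𝔪_{xy}, vertex probability measure 𝔪(x) = Σ_y 𝔪_{xy}, non-symmetric distance d with max{d(x,y),d(y,x)} ≤ Λ on edges (Λ ≥ 1), Wasserstein distance W for cost d, and Fisher information ℐ. Let c > 0. If for every probability density ρ one has W(𝔪, ρ𝔪)² ≤ ℐ(ρ)/c², then for every probability density ρ one has W(𝔪, ρ𝔪)² ≤ (√2 Λ/c) ℰ(ρ), where ℰ(ρ) = 𝔪(ρ log ρ) is the relative entropy. -/

import Mathlib

open Finset

/-- `π` is a coupling of the probability measures `ν₀` and `ν₁` on a finite set. -/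
def IsCoupling {V : Type*} [Fintype V] (π : V → V → ℝ) (ν₀ ν₁ : V → ℝ) : Prop :=
  (∀ x y, 0 ≤ π x y) ∧ (∀ x, ∑ y, π x y = ν₀ x) ∧ (∀ y, ∑ x, π x y = ν₁ y)

/-- Wasserstein distance for the (possibly non-symmetric) cost `d`. -/
noncomputable def wass {V : Type*} [Fintype V] (d : V → V → ℝ) (ν₀ ν₁ : V → ℝ) : ℝ :=
  sInf {r : ℝ | ∃ π : V → V → ℝ, IsCoupling π ν₀ ν₁ ∧ r = ∑ x, ∑ y, d x y * π x y}

/-!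
Apply the transportation-information inequality to the exponential tilts
`ρₜ = exp (t f) / 𝔪 (exp (t f))` of a centred `d`-Lipschitz `f`. Weak Kantorovich duality bounds
the logarithmic derivative of `t ↦ 𝔪 (exp (t f))` by `W(𝔪, ρₜ 𝔪)`, the hypothesis bounds this by
the Fisher information of `ρₜ`, and bounded jumps make that at most `t² Λ² / 2`. Integrating
(Herbst) gives `log 𝔪 (exp (l f)) ≤ Λ l² / (2 √2 c)`. The Gibbs variational inequality,
optimised in `l`, then bounds `𝔪 (f ρ) - 𝔪 f` by `√(√2 Λ ℰ(ρ) / c)`, and strong Kantorovich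
duality, obtained by separating the (marginals, cost) of transport plans from a ray, turns this
into the bound on `W(𝔪, ρ 𝔪)`.
-/

open Real

namespace Real

-- `tanh (t / 2) ≤ t / 2`
lemma exp_sub_one_le_mul_exp_add_one {t : ℝ} (ht : 0 ≤ t) : exp t - 1 ≤ t / 2 * (exp t + 1) := by
  let g : ℝ → ℝ := fun s => s / 2 * (exp s + 1) - (exp s - 1)
  have hg : ∀ s, HasDerivAt g (((s - 1) * exp s + 1) / 2) s := fun s =>
    ((((hasDerivAt_id s).div_const 2).mul ((hasDerivAt_exp s).add_const 1)).sub
      ((hasDerivAt_exp s).sub_const 1)).congr_deriv (by simp only [id]; ring)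
  have hg' : ∀ s, 0 ≤ deriv g s := fun s => by
    rw [(hg s).deriv]
    have h1 : (1 - s) * exp s ≤ 1 := by
      simpa [← exp_add] using
        mul_le_mul_of_nonneg_right (one_sub_le_exp_neg s) (exp_pos s).le
    linarith
  have := monotone_of_deriv_nonneg (fun s => (hg s).differentiableAt) hg' ht
  simp only [g, exp_zero] at this
  linarith

lemma sq_exp_sub_exp_le (u v : ℝ) :
    (exp u - exp v) ^ 2 ≤ (u - v) ^ 2 / 2 * (exp (2 * u) + exp (2 * v)) := by
  wlog huv : v ≤ u generalizing u v
  · have := this v u (by linarith)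
    linarith [show (exp u - exp v) ^ 2 = (exp v - exp u) ^ 2 by ring,
      show (u - v) ^ 2 = (v - u) ^ 2 by ring]
  obtain ⟨t, ht, rfl⟩ : ∃ t, 0 ≤ t ∧ u = v + t := ⟨u - v, by linarith, by ring⟩
  have hexp2 : ∀ a, exp (2 * a) = exp a ^ 2 := fun a => by rw [sq, ← exp_add, two_mul]
  have ht1 : 0 ≤ exp t - 1 := by linarith [add_one_le_exp t]
  calc (exp (v + t) - exp v) ^ 2 = exp v ^ 2 * (exp t - 1) ^ 2 := by rw [exp_add]; ring
    _ ≤ exp v ^ 2 * (t / 2 * (exp t + 1)) ^ 2 := by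
        gcongr; exact exp_sub_one_le_mul_exp_add_one ht
    _ ≤ exp v ^ 2 * (t ^ 2 / 2 * (exp t ^ 2 + 1)) := by
        gcongr
        nlinarith [sq_nonneg (exp t - 1), sq_nonneg t]
    _ = (v + t - v) ^ 2 / 2 * (exp (2 * (v + t)) + exp (2 * v)) := by
        rw [hexp2, hexp2, exp_add]; ring

lemma sqrt_exp_div (a : ℝ) {Z : ℝ} (hZ : 0 ≤ Z) : √(exp a / Z) = exp (a / 2) / √Z := by
  rw [sqrt_div' _ hZ, show exp a = exp (a / 2) ^ 2 by rw [← exp_nat_mul]; ring_nf,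
    sqrt_sq (exp_pos _).le]

lemma mul_le_mul_log_sub_add_exp {u : ℝ} (hu : 0 ≤ u) (v : ℝ) : u * v ≤ u * log u - u + exp v := by
  rcases hu.eq_or_lt with rfl | hu
  · simpa using (exp_pos v).le
  · have := mul_le_mul_of_nonneg_left (add_one_le_exp (v - log u)) hu.le
    rw [exp_sub, exp_log hu, mul_div_cancel₀ _ hu.ne'] at this
    linarith [show u * (v - log u + 1) = u * v - u * log u + u by ring]

lemma le_sqrt_of_forall_mul_le {D a K : ℝ} (hK : 0 < K)
    (h : ∀ l, 0 < l → l * D ≤ a + K * l ^ 2 / 2) : D ≤ √(2 * K * a) := by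
  rcases le_or_gt D 0 with hD | hD
  · exact hD.trans (sqrt_nonneg _)
  have := h (D / K) (div_pos hD hK) -- the minimising choice of `l`
  rw [le_sqrt' hD]
  field_simp at this
  nlinarith

end Real

lemma ContinuousLinearMap.apply_prod_prod_eq_sum {ι κ : Type*} [Fintype ι] [Fintype κ]
    [DecidableEq ι] [DecidableEq κ] (φ : StrongDual ℝ ((ι → ℝ) × (κ → ℝ) × ℝ)) (p : ι → ℝ)
    (q : κ → ℝ) (r : ℝ) :
    φ (p, q, r) = ∑ i, φ (Pi.single i 1, 0, 0) * p i + ∑ k, φ (0, Pi.single k 1, 0) * q k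
      + φ (0, 0, 1) * r := by
  have : (p, q, r) = ∑ i, p i • ((Pi.single i 1, 0, 0) : (ι → ℝ) × (κ → ℝ) × ℝ)
      + ∑ k, q k • ((0, Pi.single k 1, 0) : (ι → ℝ) × (κ → ℝ) × ℝ) + r • (0, 0, 1) := by
    ext <;> simp [Prod.fst_sum, Prod.snd_sum, Finset.sum_apply, Pi.single_apply]
  rw [this, map_add, map_add, map_sum, map_sum, map_smul]
  simp only [map_smul, smul_eq_mul, mul_comm]

section Kantorovich

variable {V : Type*} [Fintype V]

def marginalsCost (d : V → V → ℝ) : ((V × V) → ℝ) →ₗ[ℝ] (V → ℝ) × (V → ℝ) × ℝ where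
  toFun γ := (fun x => ∑ y, γ (x, y), fun y => ∑ x, γ (x, y), ∑ p, d p.1 p.2 * γ p)
  map_add' γ γ' := by ext <;> simp [sum_add_distrib, mul_add]
  map_smul' r γ := by ext <;> simp [mul_sum, mul_left_comm]

lemma marginalsCost_single [DecidableEq V] (d : V → V → ℝ) (x y : V) :
    marginalsCost d (Pi.single (x, y) 1) = (Pi.single x 1, Pi.single y 1, d x y) := by
  ext <;> simp [marginalsCost, Pi.single_apply, ite_and, eq_comm]

variable {d : V → V → ℝ} {μ ν : V → ℝ}

lemma isCoupling_mul (hμ : ∀ x, 0 ≤ μ x) (hμ1 : ∑ x, μ x = 1)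
    (hν : ∀ y, 0 ≤ ν y) (hν1 : ∑ y, ν y = 1) : IsCoupling (fun x y => μ x * ν y) μ ν :=
  ⟨fun x y => mul_nonneg (hμ x) (hν y), fun x => by rw [← mul_sum, hν1, mul_one],
    fun y => by rw [← sum_mul, hμ1, one_mul]⟩

lemma IsCoupling.cost_nonneg {γ : V → V → ℝ} (hγ : IsCoupling γ μ ν)
    (hd : ∀ x y, 0 ≤ d x y) : 0 ≤ ∑ x, ∑ y, d x y * γ x y :=
  sum_nonneg fun x _ => sum_nonneg fun y _ => mul_nonneg (hd x y) (hγ.1 x y)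

lemma IsCoupling.sum_sub_le_cost {γ : V → V → ℝ} (hγ : IsCoupling γ μ ν)
    {h : V → ℝ} (hh : ∀ x y, h y - h x ≤ d x y) :
    ∑ y, h y * ν y - ∑ x, h x * μ x ≤ ∑ x, ∑ y, d x y * γ x y :=
  calc ∑ y, h y * ν y - ∑ x, h x * μ x = ∑ x, ∑ y, (h y - h x) * γ x y := by
        simp only [← hγ.2.1, ← hγ.2.2, mul_sum, sub_mul, sum_sub_distrib]
        rw [sum_comm]
    _ ≤ ∑ x, ∑ y, d x y * γ x y :=
        sum_le_sum fun x _ => sum_le_sum fun y _ => mul_le_mul_of_nonneg_right (hh x y) (hγ.1 x y)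

lemma wass_nonneg (hd : ∀ x y, 0 ≤ d x y) : 0 ≤ wass d μ ν :=
  Real.sInf_nonneg <| by
    rintro _ ⟨γ, hγ, rfl⟩
    exact hγ.cost_nonneg hd

lemma wass_le_cost (hd : ∀ x y, 0 ≤ d x y) {γ : V → V → ℝ}
    (hγ : IsCoupling γ μ ν) : wass d μ ν ≤ ∑ x, ∑ y, d x y * γ x y :=
  csInf_le ⟨0, by rintro _ ⟨γ, hγ, rfl⟩; exact hγ.cost_nonneg hd⟩ ⟨γ, hγ, rfl⟩

lemma sum_sub_le_wass (hμ : ∀ x, 0 ≤ μ x) (hμ1 : ∑ x, μ x = 1)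
    (hν : ∀ y, 0 ≤ ν y) (hν1 : ∑ y, ν y = 1) {h : V → ℝ} (hh : ∀ x y, h y - h x ≤ d x y) :
    ∑ y, h y * ν y - ∑ x, h x * μ x ≤ wass d μ ν :=
  le_csInf ⟨_, _, isCoupling_mul hμ hμ1 hν hν1, rfl⟩ <| by
    rintro _ ⟨γ, hγ, rfl⟩
    exact hγ.sum_sub_le_cost hh

lemma exists_sum_mul_le (hμ : ∀ x, 0 ≤ μ x) (hμ1 : ∑ x, μ x = 1)
    (a : V → ℝ) : ∃ x, ∑ y, a y * μ y ≤ a x := by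
  have : Nonempty V := by
    by_contra h
    simp [not_nonempty_iff.mp h] at hμ1
  obtain ⟨x, -, hx⟩ := exists_max_image univ a univ_nonempty
  refine ⟨x, ?_⟩
  calc ∑ y, a y * μ y ≤ ∑ y, a x * μ y :=
        sum_le_sum fun y _ => mul_le_mul_of_nonneg_right (hx y (mem_univ y)) (hμ y)
    _ = a x := by rw [← mul_sum, hμ1, mul_one]

/-- The witness is the `d`-transform `y ↦ min_x (d x y - F x)`, which lies between `G` and `-F`. -/
lemma exists_lipschitz_le_sum_sub [Nonempty V] (hd0 : ∀ x, d x x = 0)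
    (htri : ∀ x y z, d x z ≤ d x y + d y z) (hμ : ∀ x, 0 ≤ μ x)
    (hν : ∀ y, 0 ≤ ν y) {F G : V → ℝ} (hFG : ∀ x y, F x + G y ≤ d x y) :
    ∃ h : V → ℝ, (∀ x y, h y - h x ≤ d x y) ∧
      ∑ x, F x * μ x + ∑ y, G y * ν y ≤ ∑ y, h y * ν y - ∑ x, h x * μ x := by
  set h : V → ℝ := fun y => univ.inf' univ_nonempty fun x => d x y - F x
  have hG : ∀ y, G y ≤ h y := fun y =>
    le_inf' _ _ fun x _ => by linarith [hFG x y]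
  have hF : ∀ x, h x ≤ -F x := fun x => by
    simpa [hd0] using inf'_le (fun z => d z x - F z) (mem_univ x)
  refine ⟨h, fun x y => ?_, ?_⟩
  · obtain ⟨z, -, hz⟩ := exists_mem_eq_inf' univ_nonempty fun z => d z x - F z
    have := inf'_le (fun z => d z y - F z) (mem_univ z)
    have : h x = d z x - F z := hz
    linarith [htri z x y]
  · have h1 : ∑ y, G y * ν y ≤ ∑ y, h y * ν y :=
      sum_le_sum fun y _ => mul_le_mul_of_nonneg_right (hG y) (hν y)
    have h2 : ∑ x, h x * μ x ≤ ∑ x, -F x * μ x :=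
      sum_le_sum fun x _ => mul_le_mul_of_nonneg_right (hF x) (hμ x)
    simp only [neg_mul, sum_neg_distrib] at h2
    linarith


/-- Hahn–Banach separation of the (marginals, cost) of transport plans from the ray
`{μ} × {ν} × (-∞, B]`; `a`, `b`, `s` are the coordinates of the separating functional. -/
lemma exists_separation_of_lt_wass (hd : ∀ x y, 0 ≤ d x y) {B : ℝ} (hB : B < wass d μ ν) :
    ∃ (a b : V → ℝ) (s u : ℝ), (∀ x y, a x + b y + d x y * s < u) ∧
      ∀ r ≤ B, u < ∑ x, a x * μ x + ∑ y, b y * ν y + r * s := by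
  classical
  have hdisj : Disjoint (marginalsCost d '' stdSimplex ℝ (V × V))
      ({μ} ×ˢ {ν} ×ˢ Set.Iic B) := by
    rw [Set.disjoint_left]
    rintro _ ⟨γ, hγ, rfl⟩ ⟨hγμ, hγν, hcost⟩
    have hcpl : IsCoupling (fun x y => γ (x, y)) μ ν :=
      ⟨fun x y => hγ.1 _, fun x => congrFun hγμ x, fun y => congrFun hγν y⟩
    have := wass_le_cost hd hcpl
    simp only [marginalsCost, LinearMap.coe_mk, AddHom.coe_mk, Set.mem_Iic,
      Fintype.sum_prod_type] at hcost
    linarith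
  obtain ⟨φ, u, v, hplan, huv, hray⟩ := geometric_hahn_banach_compact_closed
    ((convex_stdSimplex ℝ _).linear_image _)
    ((isCompact_stdSimplex ℝ _).image (marginalsCost d).continuous_of_finiteDimensional)
    ((convex_singleton μ).prod ((convex_singleton ν).prod (convex_Iic B)))
    (isClosed_singleton.prod (isClosed_singleton.prod isClosed_Iic)) hdisj
  refine ⟨fun x => φ (Pi.single x 1, 0, 0), fun y => φ (0, Pi.single y 1, 0), φ (0, 0, 1), u,
    fun x y => ?_, fun r hr => ?_⟩
  · have := hplan _ ⟨_, single_mem_stdSimplex ℝ (x, y), rfl⟩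
    rw [marginalsCost_single, φ.apply_prod_prod_eq_sum] at this
    simp only [Pi.single_apply, mul_ite, mul_one, mul_zero, sum_ite_eq', mem_univ,
      if_true] at this
    linarith
  · have := hray (μ, ν, r) ⟨rfl, rfl, hr⟩
    rw [φ.apply_prod_prod_eq_sum] at this
    linarith

lemma exists_dual_pair_of_lt_wass (hd : ∀ x y, 0 ≤ d x y) (hμ : ∀ x, 0 ≤ μ x)
    (hμ1 : ∑ x, μ x = 1) (hν : ∀ y, 0 ≤ ν y) (hν1 : ∑ y, ν y = 1) {B : ℝ}
    (hB : B < wass d μ ν) :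
    ∃ F G : V → ℝ, (∀ x y, F x + G y ≤ d x y) ∧ B ≤ ∑ x, F x * μ x + ∑ y, G y * ν y := by
  obtain ⟨a, b, s, u, hplan, hray⟩ := exists_separation_of_lt_wass hd hB
  set A := ∑ x, a x * μ x
  set A' := ∑ y, b y * ν y
  have hs : s < 0 := by
    rcases lt_trichotomy s 0 with hs | hs | hs
    · exact hs
    · -- the plan `δ_x ⊗ δ_y` with `a x ≥ A` and `b y ≥ A'` beats the ray
      obtain ⟨x, hx⟩ := exists_sum_mul_le hμ hμ1 a
      obtain ⟨y, hy⟩ := exists_sum_mul_le hν hν1 b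
      have := hray B le_rfl
      have := hplan x y
      rw [hs, mul_zero] at *
      linarith
    · -- the ray goes to `-∞`
      have := mul_le_mul_of_nonneg_right (min_le_right B ((u - A - A') / s)) hs.le
      rw [div_mul_cancel₀ _ hs.ne'] at this
      linarith [hray _ (min_le_left B ((u - A - A') / s))]
  refine ⟨fun x => a x / -s, fun y => (b y - A - A') / -s + B, fun x y => ?_, le_of_eq ?_⟩
  · have : (a x + b y - A - A') / -s ≤ d x y - B := by
      rw [div_le_iff₀ (neg_pos.mpr hs)]
      linarith [hplan x y, hray B le_rfl]
    linarith [show a x / -s + ((b y - A - A') / -s + B) = (a x + b y - A - A') / -s + B by ring]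
  · simp only [add_mul, sub_mul, div_mul_eq_mul_div, sum_add_distrib, sum_sub_distrib, ← sum_div,
      ← mul_sum, hν1, mul_one]
    field_simp
    ring

theorem wass_le_of_forall_lipschitz [Nonempty V] (hd : ∀ x y, 0 ≤ d x y) (hd0 : ∀ x, d x x = 0)
    (htri : ∀ x y z, d x z ≤ d x y + d y z) (hμ : ∀ x, 0 ≤ μ x) (hμ1 : ∑ x, μ x = 1)
    (hν : ∀ y, 0 ≤ ν y) (hν1 : ∑ y, ν y = 1) {B : ℝ}
    (hB : ∀ h : V → ℝ, (∀ x y, h y - h x ≤ d x y) → ∑ y, h y * ν y - ∑ x, h x * μ x ≤ B) :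
    wass d μ ν ≤ B :=
  le_of_forall_lt_imp_le_of_dense fun B' hB' => by
    obtain ⟨F, G, hFG, hB'FG⟩ := exists_dual_pair_of_lt_wass hd hμ hμ1 hν hν1 hB'
    obtain ⟨h, hlip, hh⟩ := exists_lipschitz_le_sum_sub hd0 htri hμ hν hFG
    exact hB'FG.trans (hh.trans (hB h hlip))

end Kantorovich

section Entropy

variable {V : Type*} [Fintype V] [Nonempty V] {m ρ : V → ℝ}

lemma sum_mul_le_entropy_add_log_sum_exp (hm : ∀ x, 0 < m x) (hρ : ∀ x, 0 ≤ ρ x)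
    (hρ1 : ∑ x, ρ x * m x = 1) (g : V → ℝ) :
    ∑ x, g x * (ρ x * m x) ≤ ∑ x, ρ x * log (ρ x) * m x + log (∑ x, exp (g x) * m x) := by
  set Z := ∑ x, exp (g x) * m x
  have hZ : 0 < Z := sum_pos (fun x _ => mul_pos (exp_pos _) (hm x)) univ_nonempty
  have key : ∑ x, ρ x * (g x - log Z) * m x
      ≤ ∑ x, (ρ x * log (ρ x) - ρ x + exp (g x - log Z)) * m x :=
    sum_le_sum fun x _ => mul_le_mul_of_nonneg_right
      (mul_le_mul_log_sub_add_exp (hρ x) _) (hm x).le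
  have hlhs : ∑ x, ρ x * (g x - log Z) * m x = ∑ x, g x * (ρ x * m x) - log Z := by
    simp only [mul_sub, sub_mul, sum_sub_distrib, mul_comm (ρ _) (log Z), mul_assoc, ← mul_sum,
      hρ1, mul_one]
    simp only [mul_left_comm]
  have hrhs : ∑ x, (ρ x * log (ρ x) - ρ x + exp (g x - log Z)) * m x
      = ∑ x, ρ x * log (ρ x) * m x := by
    simp only [exp_sub, exp_log hZ, add_mul, sub_mul, sum_add_distrib, sum_sub_distrib,
      div_mul_eq_mul_div, ← sum_div, hρ1]
    rw [show (∑ x, exp (g x) * m x) / Z = 1 from div_self hZ.ne', sub_add_cancel]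
  linarith

end Entropy

section Herbst

variable {V : Type*} [Fintype V] {w : V → V → ℝ} {m : V → ℝ} {d : V → V → ℝ} {Λ c : ℝ}

-- The paper's `𝔪 (Γ (exp g)) ≤ (exp (2 g), Γ g)`, applied to `g / 2`.
lemma sum_sq_exp_half_sub_le (hsym : ∀ x y, w x y = w y x) (hw : ∀ x y, 0 ≤ w x y)
    (g : V → ℝ) :
    ∑ x, ∑ y, (exp (g y / 2) - exp (g x / 2)) ^ 2 * w x y
      ≤ (∑ x, ∑ y, (g y - g x) ^ 2 * w x y * exp (g x)) / 4 := by
  have hpt : ∀ x y, (exp (g y / 2) - exp (g x / 2)) ^ 2 * w x y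
      ≤ ((g y - g x) ^ 2 * w x y * exp (g y) + (g y - g x) ^ 2 * w x y * exp (g x)) / 8 := by
    intro x y
    have := mul_le_mul_of_nonneg_right (sq_exp_sub_exp_le (g y / 2) (g x / 2)) (hw x y)
    rw [mul_div_cancel₀ _ two_ne_zero, mul_div_cancel₀ _ two_ne_zero] at this
    linarith
  have hswap : ∑ x, ∑ y, (g y - g x) ^ 2 * w x y * exp (g y)
      = ∑ x, ∑ y, (g y - g x) ^ 2 * w x y * exp (g x) := by
    rw [sum_comm]
    refine sum_congr rfl fun x _ => sum_congr rfl fun y _ => ?_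
    rw [hsym]
    ring
  calc ∑ x, ∑ y, (exp (g y / 2) - exp (g x / 2)) ^ 2 * w x y
      ≤ ∑ x, ∑ y, ((g y - g x) ^ 2 * w x y * exp (g y)
          + (g y - g x) ^ 2 * w x y * exp (g x)) / 8 :=
        sum_le_sum fun x _ => sum_le_sum fun y _ => hpt x y
    _ = (∑ x, ∑ y, (g y - g x) ^ 2 * w x y * exp (g x)) / 4 := by
        simp only [← sum_div, sum_add_distrib, hswap]
        ring

-- The paper's `2 Γ f ≤ Λ²` for `d`-Lipschitz `f`.
lemma sum_sq_sub_mul_le (hw : ∀ x y, 0 ≤ w x y)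
    (hedge : ∀ x y, 0 < w x y → max (d x y) (d y x) ≤ Λ) {f : V → ℝ}
    (hf : ∀ x y, f y - f x ≤ d x y) (x : V) :
    ∑ y, (f y - f x) ^ 2 * w x y ≤ Λ ^ 2 * ∑ y, w x y := by
  rw [mul_sum]
  refine sum_le_sum fun y _ => ?_
  rcases (hw x y).eq_or_lt with hxy | hxy
  · simp [← hxy]
  · have hxy' := max_le_iff.mp (hedge x y hxy)
    have : (f y - f x) ^ 2 ≤ Λ ^ 2 :=
      sq_le_sq' (by linarith [hf y x, hxy'.2]) ((hf x y).trans hxy'.1)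
    exact mul_le_mul_of_nonneg_right this hxy.le

lemma hasDerivAt_sum_exp_mul (f : V → ℝ) (t : ℝ) :
    HasDerivAt (fun t => ∑ x, exp (t * f x) * m x) (∑ x, f x * exp (t * f x) * m x) t :=
  HasDerivAt.fun_sum fun x _ =>
    (((hasDerivAt_mul_const (f x)).exp).mul_const (m x)).congr_deriv (by ring)

variable [Nonempty V]

-- The left-hand side is half the Fisher information of the tilt `exp (t f) / Z`.
lemma sum_sq_sqrt_tilt_sub_le (hsym : ∀ x y, w x y = w y x) (hw : ∀ x y, 0 ≤ w x y)
    (hm : ∀ x, m x = ∑ y, w x y) (hmpos : ∀ x, 0 < m x)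
    (hedge : ∀ x y, 0 < w x y → max (d x y) (d y x) ≤ Λ) {f : V → ℝ}
    (hf : ∀ x y, f y - f x ≤ d x y) (t : ℝ) {Z : ℝ}
    (hZ : ∑ x, exp (t * f x) * m x = Z) :
    ∑ x, ∑ y, (√(exp (t * f y) / Z) - √(exp (t * f x) / Z)) ^ 2 * w x y
      ≤ t ^ 2 * Λ ^ 2 / 4 := by
  have hZpos : 0 < Z := hZ ▸ sum_pos (fun x _ => mul_pos (exp_pos _) (hmpos x)) univ_nonempty
  calc ∑ x, ∑ y, (√(exp (t * f y) / Z) - √(exp (t * f x) / Z)) ^ 2 * w x y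
      = (∑ x, ∑ y, (exp (t * f y / 2) - exp (t * f x / 2)) ^ 2 * w x y) / Z := by
        simp only [sqrt_exp_div _ hZpos.le, ← sub_div, div_pow, sq_sqrt hZpos.le,
          div_mul_eq_mul_div, ← sum_div]
    _ ≤ (∑ x, ∑ y, (t * f y - t * f x) ^ 2 * w x y * exp (t * f x)) / 4 / Z := by
        gcongr
        exact sum_sq_exp_half_sub_le hsym hw fun x => t * f x
    _ = t ^ 2 * (∑ x, (∑ y, (f y - f x) ^ 2 * w x y) * exp (t * f x)) / 4 / Z := by
        simp only [mul_sum, sum_mul]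
        congr 2
        refine sum_congr rfl fun x _ => sum_congr rfl fun y _ => ?_
        ring
    _ ≤ t ^ 2 * (∑ x, Λ ^ 2 * m x * exp (t * f x)) / 4 / Z := by
        gcongr with x
        rw [hm]
        exact sum_sq_sub_mul_le hw hedge hf x
    _ = t ^ 2 * Λ ^ 2 / 4 := by
        simp only [mul_assoc, ← mul_sum, mul_comm (m _), hZ]
        field_simp

lemma sum_mul_exp_div_le_of_transport_info (hsym : ∀ x y, w x y = w y x)
    (hw : ∀ x y, 0 ≤ w x y) (hm : ∀ x, m x = ∑ y, w x y) (hmpos : ∀ x, 0 < m x)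
    (hprob : ∑ x, m x = 1) (hΛ : 0 ≤ Λ) (hedge : ∀ x y, 0 < w x y → max (d x y) (d y x) ≤ Λ)
    (hc : 0 < c)
    (hTI : ∀ ρ : V → ℝ, (∀ x, 0 ≤ ρ x) → ∑ x, ρ x * m x = 1 →
      wass d m (fun x => ρ x * m x) ^ 2
        ≤ (2 * ∑ x, ∑ y, (Real.sqrt (ρ y) - Real.sqrt (ρ x)) ^ 2 * w x y) / c ^ 2)
    {f : V → ℝ} (hf : ∀ x y, f y - f x ≤ d x y) (hmean : ∑ x, f x * m x = 0) {t : ℝ}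
    (ht : 0 ≤ t) :
    (∑ x, f x * exp (t * f x) * m x) / ∑ x, exp (t * f x) * m x ≤ Λ / (√2 * c) * t := by
  set Z := ∑ x, exp (t * f x) * m x with hZ
  have hZpos : 0 < Z := sum_pos (fun x _ => mul_pos (exp_pos _) (hmpos x)) univ_nonempty
  set ρ : V → ℝ := fun x => exp (t * f x) / Z
  have hρ : ∀ x, 0 ≤ ρ x := fun x => div_nonneg (exp_pos _).le hZpos.le
  have hρ1 : ∑ x, ρ x * m x = 1 := by
    simp only [ρ, div_mul_eq_mul_div, ← sum_div, ← hZ, div_self hZpos.ne']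
  have hW : wass d m (fun x => ρ x * m x) ^ 2 ≤ (Λ / (√2 * c) * t) ^ 2 :=
    calc wass d m (fun x => ρ x * m x) ^ 2
        ≤ (2 * ∑ x, ∑ y, (√(ρ y) - √(ρ x)) ^ 2 * w x y) / c ^ 2 := hTI ρ hρ hρ1
      _ ≤ (2 * (t ^ 2 * Λ ^ 2 / 4)) / c ^ 2 := by
          gcongr
          exact sum_sq_sqrt_tilt_sub_le hsym hw hm hmpos hedge hf t hZ.symm
      _ = (Λ / (√2 * c) * t) ^ 2 := by
          field_simp
          rw [sq_sqrt zero_le_two]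
          ring
  have hdual := sum_sub_le_wass (fun x => (hmpos x).le) hprob
    (fun x => mul_nonneg (hρ x) (hmpos x).le) hρ1 hf
  have hfρ : ∑ x, f x * (ρ x * m x) = (∑ x, f x * exp (t * f x) * m x) / Z := by
    rw [sum_div]
    exact sum_congr rfl fun x _ => by simp only [ρ]; ring
  rw [hfρ, hmean, sub_zero] at hdual
  exact hdual.trans ((le_abs_self _).trans (abs_le_of_sq_le_sq hW (by positivity)))

/-- Herbst's argument: integrate the bound on the logarithmic derivative of `𝔪 (exp (t f))`. -/
lemma log_sum_exp_mul_le_of_transport_info (hsym : ∀ x y, w x y = w y x)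
    (hw : ∀ x y, 0 ≤ w x y) (hm : ∀ x, m x = ∑ y, w x y) (hmpos : ∀ x, 0 < m x)
    (hprob : ∑ x, m x = 1) (hΛ : 0 ≤ Λ) (hedge : ∀ x y, 0 < w x y → max (d x y) (d y x) ≤ Λ)
    (hc : 0 < c)
    (hTI : ∀ ρ : V → ℝ, (∀ x, 0 ≤ ρ x) → ∑ x, ρ x * m x = 1 →
      wass d m (fun x => ρ x * m x) ^ 2
        ≤ (2 * ∑ x, ∑ y, (Real.sqrt (ρ y) - Real.sqrt (ρ x)) ^ 2 * w x y) / c ^ 2)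
    {f : V → ℝ} (hf : ∀ x y, f y - f x ≤ d x y) (hmean : ∑ x, f x * m x = 0) {l : ℝ}
    (hl : 0 ≤ l) :
    log (∑ x, exp (l * f x) * m x) ≤ Λ / (√2 * c) * l ^ 2 / 2 := by
  have hZpos : ∀ t, 0 < ∑ x, exp (t * f x) * m x := fun t =>
    sum_pos (fun x _ => mul_pos (exp_pos _) (hmpos x)) univ_nonempty
  have hlog : ∀ t, HasDerivAt (fun t => log (∑ x, exp (t * f x) * m x))
      ((∑ x, f x * exp (t * f x) * m x) / ∑ x, exp (t * f x) * m x) t := fun t =>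
    (hasDerivAt_sum_exp_mul f t).log (hZpos t).ne'
  have hquad : ∀ t, HasDerivAt (fun t => Λ / (√2 * c) * t ^ 2 / 2) (Λ / (√2 * c) * t) t :=
    fun t => (((hasDerivAt_pow 2 t).const_mul _).div_const 2).congr_deriv (by ring)
  refine image_le_of_deriv_right_le_deriv_boundary (a := 0) (b := l)
    (fun t _ => (hlog t).continuousAt.continuousWithinAt)
    (fun t _ => (hlog t).hasDerivWithinAt) (by simp [hprob])
    (fun t _ => (hquad t).continuousAt.continuousWithinAt) (fun t _ => (hquad t).hasDerivWithinAt)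
    (fun t ht => sum_mul_exp_div_le_of_transport_info hsym hw hm hmpos hprob hΛ hedge hc hTI hf
      hmean ht.1) ⟨hl, le_rfl⟩

end Herbst

section BobkovGotze

variable {V : Type*} [Fintype V] [Nonempty V] {m : V → ℝ} {d : V → V → ℝ}

/-- Bobkov–Götze: a Gaussian bound on the Laplace transform of centred `d`-Lipschitz functions
gives a transportation-entropy inequality, through the Gibbs variational inequality. -/
lemma wass_le_sqrt_of_log_sum_exp_mul_le (hd : ∀ x y, 0 ≤ d x y) (hd0 : ∀ x, d x x = 0)
    (htri : ∀ x y z, d x z ≤ d x y + d y z) (hmpos : ∀ x, 0 < m x) (hprob : ∑ x, m x = 1)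
    {K : ℝ} (hK : 0 < K)
    (hlap : ∀ f : V → ℝ, (∀ x y, f y - f x ≤ d x y) → ∑ x, f x * m x = 0 → ∀ l, 0 ≤ l →
      log (∑ x, exp (l * f x) * m x) ≤ K * l ^ 2 / 2)
    {ρ : V → ℝ} (hρ : ∀ x, 0 ≤ ρ x) (hρ1 : ∑ x, ρ x * m x = 1) :
    wass d m (fun x => ρ x * m x) ≤ √(2 * K * ∑ x, ρ x * log (ρ x) * m x) := by
  refine wass_le_of_forall_lipschitz hd hd0 htri (fun x => (hmpos x).le) hprob
    (fun x => mul_nonneg (hρ x) (hmpos x).le) hρ1 fun h hh => ?_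
  set f : V → ℝ := fun x => h x - ∑ z, h z * m z
  have hf : ∀ x y, f y - f x ≤ d x y := fun x y => by simpa [f] using hh x y
  have hmean : ∑ x, f x * m x = 0 := by
    simp only [f, sub_mul, sum_sub_distrib, ← mul_sum, hprob, mul_one, sub_self]
  refine le_sqrt_of_forall_mul_le hK fun l hl => ?_
  calc l * (∑ y, h y * (ρ y * m y) - ∑ x, h x * m x) = ∑ x, l * f x * (ρ x * m x) := by
        simp only [f, mul_sub, sub_mul, sum_sub_distrib, ← mul_sum, hρ1, mul_one,
          mul_assoc]
    _ ≤ ∑ x, ρ x * log (ρ x) * m x + log (∑ x, exp (l * f x) * m x) :=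
        sum_mul_le_entropy_add_log_sum_exp hmpos hρ hρ1 _
    _ ≤ ∑ x, ρ x * log (ρ x) * m x + K * l ^ 2 / 2 := by
        gcongr
        exact hlap f hf hmean l hl.le

end BobkovGotze

theorem transport_info_implies_transport_entropy_general {V : Type*} [Fintype V] [Nonempty V]
    (w : V → V → ℝ) (m : V → ℝ) (d : V → V → ℝ) (Λ c : ℝ)
    (hsym : ∀ x y, w x y = w y x) (hnn : ∀ x y, 0 ≤ w x y)
    (hm : ∀ x, m x = ∑ y, w x y) (hmpos : ∀ x, 0 < m x) (hprob : ∑ x, m x = 1)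
    (hdnn : ∀ x y, 0 ≤ d x y) (hdzero : ∀ x, d x x = 0)
    (htri : ∀ x y z, d x z ≤ d x y + d y z)
    (hΛ : 1 ≤ Λ) (hedge : ∀ x y, 0 < w x y → max (d x y) (d y x) ≤ Λ) (hc : 0 < c)
    (hTI : ∀ ρ : V → ℝ, (∀ x, 0 ≤ ρ x) → ∑ x, ρ x * m x = 1 →
      wass d m (fun x => ρ x * m x) ^ 2
        ≤ (2 * ∑ x, ∑ y, (Real.sqrt (ρ y) - Real.sqrt (ρ x)) ^ 2 * w x y) / c ^ 2) :
    ∀ ρ : V → ℝ, (∀ x, 0 ≤ ρ x) → ∑ x, ρ x * m x = 1 →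
      wass d m (fun x => ρ x * m x) ^ 2
        ≤ (Real.sqrt 2 * Λ / c) * ∑ x, ρ x * Real.log (ρ x) * m x := by
  intro ρ hρ hρ1
  have hK : 0 < Λ / (√2 * c) := by positivity
  have hW := wass_le_sqrt_of_log_sum_exp_mul_le hdnn hdzero htri hmpos hprob hK
    (fun f hf hmean l hl => log_sum_exp_mul_le_of_transport_info hsym hnn hm hmpos hprob
      (by linarith) hedge hc hTI hf hmean hl) hρ hρ1
  have hEnt : 0 ≤ ∑ x, ρ x * log (ρ x) * m x := by
    simpa [hprob] using sum_mul_le_entropy_add_log_sum_exp hmpos hρ hρ1 0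
  calc wass d m (fun x => ρ x * m x) ^ 2
      ≤ √(2 * (Λ / (√2 * c)) * ∑ x, ρ x * log (ρ x) * m x) ^ 2 :=
        pow_le_pow_left₀ (wass_nonneg hdnn) hW 2
    _ = √2 * Λ / c * ∑ x, ρ x * log (ρ x) * m x := by
        rw [sq_sqrt (by positivity)]
        field_simp
        rw [sq_sqrt zero_le_two]

/-- The transportation-information inequality implies the transportation-entropy inequality
on a finite weighted graph with bounded jumps. -/
theorem transport_info_implies_transport_entropy {V : Type*} [Fintype V] [Nonempty V]
    (w : V → V → ℝ) (m : V → ℝ) (d : V → V → ℝ) (Λ c : ℝ)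
    (hsym : ∀ x y, w x y = w y x) (hnn : ∀ x y, 0 ≤ w x y)
    (hm : ∀ x, m x = ∑ y, w x y) (hmpos : ∀ x, 0 < m x) (hprob : ∑ x, m x = 1)
    (hdnn : ∀ x y, 0 ≤ d x y) (hdzero : ∀ x, d x x = 0)
    (hdpos : ∀ x y, x ≠ y → 0 < d x y) (htri : ∀ x y z, d x z ≤ d x y + d y z)
    (hΛ : 1 ≤ Λ) (hedge : ∀ x y, 0 < w x y → max (d x y) (d y x) ≤ Λ) (hc : 0 < c)
    (hTI : ∀ ρ : V → ℝ, (∀ x, 0 ≤ ρ x) → ∑ x, ρ x * m x = 1 →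
      wass d m (fun x => ρ x * m x) ^ 2
        ≤ (2 * ∑ x, ∑ y, (Real.sqrt (ρ y) - Real.sqrt (ρ x)) ^ 2 * w x y) / c ^ 2) :
    ∀ ρ : V → ℝ, (∀ x, 0 ≤ ρ x) → ∑ x, ρ x * m x = 1 →
      wass d m (fun x => ρ x * m x) ^ 2
        ≤ (Real.sqrt 2 * Λ / c) * ∑ x, ρ x * Real.log (ρ x) * m x :=
  transport_info_implies_transport_entropy_general w m d Λ c hsym hnn hm hmpos hprob hdnn hdzero
    htri hΛ hedge hc hTI
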